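/- Eigenvector localization at large penalty: for S ⊆ V nonempty with connected induced subgraph and S^c nonempty, the normalized positive minimizers ψ^α of λ^α(χ_S) converge as α → ∞ to the (unique, positive on S) normalized first Dirichlet eigenvector ψ^D of S; in particular Σ_{i∈S^c} d_i^r (ψ^α_i)² → 0. -/

import Mathlib

open Finset

/-- Dirichlet energy (gradient) form: `(1/2) ∑_{i,j} w_{ij} (ψ_i - ψ_j)²`. -/
noncomputable def gradE {n : ℕ} (w : Fin n → Fin n → ℝ) (ψ : Fin n → ℝ) : ℝ :=
  (1 / 2) * ∑ i, ∑ j, w i j * (ψ i - ψ j) ^ 2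

/-- Weighted squared norm `∑ i, d_i^r ψ_i²`. -/
noncomputable def dnorm {n : ℕ} (d : Fin n → ℝ) (r : ℝ) (ψ : Fin n → ℝ) : ℝ :=
  ∑ i, Real.rpow (d i) r * ψ i ^ 2

/-- First Dirichlet eigenvalue of the subset `S`. -/
noncomputable def dirEig {n : ℕ} (w : Fin n → Fin n → ℝ) (d : Fin n → ℝ) (r : ℝ)
    (S : Finset (Fin n)) : ℝ :=
  sInf { e : ℝ | ∃ ψ : Fin n → ℝ, (∀ i, i ∉ S → ψ i = 0) ∧ dnorm d r ψ = 1 ∧ e = gradE w ψ }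

/-- Relaxed eigenvalue `λ^α(φ)`. -/
noncomputable def lamAlpha {n : ℕ} (w : Fin n → Fin n → ℝ) (d : Fin n → ℝ) (r α : ℝ)
    (φ : Fin n → ℝ) : ℝ :=
  sInf { e : ℝ | ∃ ψ : Fin n → ℝ, dnorm d r ψ = 1 ∧
    e = gradE w ψ + α * ∑ i, Real.rpow (d i) r * (1 - φ i) * ψ i ^ 2 }

/-- Graph Laplacian `Δ_r = D^{-r}(D - W)` applied to `ψ` at vertex `i`. -/
noncomputable def lapApply {n : ℕ} (w : Fin n → Fin n → ℝ) (d : Fin n → ℝ) (r : ℝ)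
    (ψ : Fin n → ℝ) (i : Fin n) : ℝ :=
  Real.rpow (d i) (-r) * (d i * ψ i - ∑ j, w i j * ψ j)

/-- Indicator function of a vertex subset. -/
def ind {n : ℕ} (S : Finset (Fin n)) : Fin n → ℝ := fun i => if i ∈ S then 1 else 0

/-- The admissible class `𝒜_k`. -/
def memA {k n : ℕ} (Φ : Fin k → Fin n → ℝ) : Prop :=
  (∀ i v, 0 ≤ Φ i v ∧ Φ i v ≤ 1) ∧ ∀ v, ∑ i, Φ i v = 1

/-- The relaxed partition energy `Λ^α_k`. -/
noncomputable def LamK {k n : ℕ} (w : Fin n → Fin n → ℝ) (d : Fin n → ℝ) (r α : ℝ)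
    (Φ : Fin k → Fin n → ℝ) : ℝ :=
  ∑ i, lamAlpha w d r α (Φ i)

/-- The weighted graph is connected. -/
def gconn {n : ℕ} (w : Fin n → Fin n → ℝ) : Prop :=
  ∀ i j : Fin n, Relation.ReflTransGen (fun a b => 0 < w a b) i j

/-!
Testing the variational problem for `λ^α(χ_S)` with `ψ^D` gives
`E(ψ^α) + α ∑_{Sᶜ} d_i^r (ψ^α_i)² = λ^α(χ_S) ≤ E(ψ^D) = λ^D(S)`, so the mass of `ψ^α` outside `S`
is at most `λ^D(S)/α` and the energies stay below `λ^D(S)`. By compactness of the unit sphere,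
every cluster point of `ψ^α` as `α → ∞` is then a nonnegative normalized Dirichlet minimizer
on `S`. Such a minimizer is unique: if `a` and `b` are minimizers, so is `√((a² + b²)/2)`, and
equality in the edgewise Cauchy–Schwarz inequality forces `a_i b_j = a_j b_i` along every edge
inside `S`; connectivity of `S` makes `a` a multiple of `b`, and normalization and signs make
the multiple `1`.
-/

open Filter Topology

variable {n : ℕ}

noncomputable def outerMass (d : Fin n → ℝ) (r : ℝ) (S : Finset (Fin n)) (ψ : Fin n → ℝ) : ℝ :=
  ∑ i ∈ Sᶜ, Real.rpow (d i) r * ψ i ^ 2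

structure IsDirichletMinimizer (w : Fin n → Fin n → ℝ) (d : Fin n → ℝ) (r : ℝ)
    (S : Finset (Fin n)) (ψ : Fin n → ℝ) : Prop where
  eq_zero_of_notMem : ∀ i, i ∉ S → ψ i = 0
  dnorm_eq_one : dnorm d r ψ = 1
  gradE_eq : gradE w ψ = dirEig w d r S

noncomputable def quadMean (a b : Fin n → ℝ) : Fin n → ℝ :=
  fun i => √((a i ^ 2 + b i ^ 2) / 2)

section Energy

variable {w : Fin n → Fin n → ℝ} {d : Fin n → ℝ} {r : ℝ} {S : Finset (Fin n)}

lemma gradE_nonneg (hnn : ∀ i j, 0 ≤ w i j) (ψ : Fin n → ℝ) : 0 ≤ gradE w ψ :=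
  mul_nonneg (by norm_num) <| sum_nonneg fun i _ => sum_nonneg fun j _ =>
    mul_nonneg (hnn i j) (sq_nonneg _)

lemma continuous_gradE (w : Fin n → Fin n → ℝ) : Continuous (gradE w) := by
  unfold gradE
  fun_prop

lemma continuous_dnorm (d : Fin n → ℝ) (r : ℝ) : Continuous (dnorm d r) := by
  unfold dnorm
  fun_prop

lemma continuous_outerMass (d : Fin n → ℝ) (r : ℝ) (S : Finset (Fin n)) :
    Continuous (outerMass d r S) := by
  unfold outerMass
  fun_prop

lemma dnorm_smul (t : ℝ) (ψ : Fin n → ℝ) : dnorm d r (t • ψ) = t ^ 2 * dnorm d r ψ := by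
  simp only [dnorm, mul_sum, Pi.smul_apply, smul_eq_mul]
  exact sum_congr rfl fun i _ => by ring

lemma outerMass_nonneg (hd : ∀ i, 0 ≤ d i) (ψ : Fin n → ℝ) : 0 ≤ outerMass d r S ψ :=
  sum_nonneg fun i _ => mul_nonneg (Real.rpow_nonneg (hd i) r) (sq_nonneg _)

lemma eq_zero_of_outerMass_eq_zero (hdpos : ∀ i, 0 < d i) {ψ : Fin n → ℝ}
    (h : outerMass d r S ψ = 0) {i : Fin n} (hi : i ∉ S) : ψ i = 0 := by
  have hterm := (sum_eq_zero_iff_of_nonneg fun j _ =>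
    mul_nonneg (Real.rpow_nonneg (hdpos j).le r) (sq_nonneg (ψ j))).mp h i (mem_compl.mpr hi)
  exact pow_eq_zero_iff two_ne_zero |>.mp <|
    (mul_eq_zero.mp hterm).resolve_left (Real.rpow_pos_of_pos (hdpos i) r).ne'

lemma sum_penalty_ind_eq_outerMass (ψ : Fin n → ℝ) :
    ∑ i, Real.rpow (d i) r * (1 - ind S i) * ψ i ^ 2 = outerMass d r S ψ := by
  rw [← sum_add_sum_compl S, sum_eq_zero fun i hi => by simp [ind, hi], zero_add]
  exact sum_congr rfl fun i hi => by simp [ind, mem_compl.mp hi]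

lemma isCompact_dnorm_eq_one (hdpos : ∀ i, 0 < d i) : IsCompact {ψ | dnorm d r ψ = 1} := by
  let c : Fin n → ℝ := fun i => √(1 / Real.rpow (d i) r)
  refine (isCompact_univ_pi fun i => isCompact_Icc (a := -c i) (b := c i)).of_isClosed_subset
    (isClosed_eq (continuous_dnorm d r) continuous_const) fun ψ hψ i _ => ?_
  have hterm : Real.rpow (d i) r * ψ i ^ 2 ≤ dnorm d r ψ :=
    single_le_sum (f := fun j => Real.rpow (d j) r * ψ j ^ 2)
      (fun j _ => mul_nonneg (Real.rpow_nonneg (hdpos j).le r) (sq_nonneg _)) (mem_univ i)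
  have hsq : ψ i ^ 2 ≤ 1 / Real.rpow (d i) r :=
    (le_div_iff₀' (Real.rpow_pos_of_pos (hdpos i) r)).mpr (hterm.trans_eq hψ)
  exact abs_le.mp (Real.abs_le_sqrt hsq)

end Energy

section Rayleigh

variable {w : Fin n → Fin n → ℝ} {d : Fin n → ℝ} {r : ℝ} {S : Finset (Fin n)}

lemma gradE_eq_sum_sub_sum (hsym : ∀ i j, w i j = w j i) (hd : ∀ i, d i = ∑ j, w i j)
    (ψ : Fin n → ℝ) :
    gradE w ψ = ∑ i, d i * ψ i ^ 2 - ∑ i, ψ i * ∑ j, w i j * ψ j := by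
  have hrow : ∑ i, ∑ j, w i j * ψ i ^ 2 = ∑ i, d i * ψ i ^ 2 :=
    sum_congr rfl fun i _ => by rw [← sum_mul, hd i]
  have hcol : ∑ i, ∑ j, w i j * ψ j ^ 2 = ∑ i, d i * ψ i ^ 2 := by
    rw [sum_comm]
    exact sum_congr rfl fun j _ => by simp_rw [← sum_mul, hd j, hsym j]
  have hexpand : ∀ i j, w i j * (ψ i - ψ j) ^ 2
      = w i j * ψ i ^ 2 + w i j * ψ j ^ 2 - 2 * (ψ i * (w i j * ψ j)) := fun i j => by ring
  simp_rw [gradE, hexpand, sum_sub_distrib, sum_add_distrib, ← mul_sum, hrow, hcol]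
  ring

lemma sum_rpow_mul_lapApply (hsym : ∀ i j, w i j = w j i) (hd : ∀ i, d i = ∑ j, w i j)
    (hdpos : ∀ i, 0 < d i) (ψ : Fin n → ℝ) :
    ∑ i, Real.rpow (d i) r * ψ i * lapApply w d r ψ i = gradE w ψ := by
  have hterm : ∀ i, Real.rpow (d i) r * ψ i * lapApply w d r ψ i
      = d i * ψ i ^ 2 - ψ i * ∑ j, w i j * ψ j := fun i => by
    have hcancel : d i ^ r * d i ^ (-r) = 1 := by
      rw [← Real.rpow_add (hdpos i), add_neg_cancel, Real.rpow_zero]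
    simp only [lapApply, Real.rpow_eq_pow]
    linear_combination (ψ i * (d i * ψ i - ∑ j, w i j * ψ j)) * hcancel
  rw [sum_congr rfl fun i _ => hterm i, sum_sub_distrib, gradE_eq_sum_sub_sum hsym hd]

lemma gradE_add_mul_outerMass_eq_of_eigen (hsym : ∀ i j, w i j = w j i)
    (hd : ∀ i, d i = ∑ j, w i j) (hdpos : ∀ i, 0 < d i) {α lam : ℝ} {ψ : Fin n → ℝ}
    (hψ : dnorm d r ψ = 1)
    (heig : ∀ i, lapApply w d r ψ i + α * (1 - ind S i) * ψ i = lam * ψ i) :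
    gradE w ψ + α * outerMass d r S ψ = lam := by
  have hsum : ∑ i, Real.rpow (d i) r * ψ i * (lapApply w d r ψ i + α * (1 - ind S i) * ψ i)
      = lam * dnorm d r ψ := by
    rw [dnorm, mul_sum]
    exact sum_congr rfl fun i _ => by rw [heig i]; ring
  have hsplit : ∑ i, Real.rpow (d i) r * ψ i * (lapApply w d r ψ i + α * (1 - ind S i) * ψ i)
      = ∑ i, Real.rpow (d i) r * ψ i * lapApply w d r ψ i
        + α * ∑ i, Real.rpow (d i) r * (1 - ind S i) * ψ i ^ 2 := by
    rw [mul_sum, ← sum_add_distrib]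
    exact sum_congr rfl fun i _ => by ring
  rwa [hsplit, sum_rpow_mul_lapApply hsym hd hdpos, sum_penalty_ind_eq_outerMass, hψ,
    mul_one] at hsum

end Rayleigh

section Variational

variable {w : Fin n → Fin n → ℝ} {d : Fin n → ℝ} {r : ℝ} {S : Finset (Fin n)}
  {ψ : Fin n → ℝ}

lemma dirEig_le_gradE (hnn : ∀ i j, 0 ≤ w i j) (h0 : ∀ i, i ∉ S → ψ i = 0)
    (h1 : dnorm d r ψ = 1) : dirEig w d r S ≤ gradE w ψ :=
  csInf_le ⟨0, by rintro _ ⟨φ, -, -, rfl⟩; exact gradE_nonneg hnn φ⟩ ⟨ψ, h0, h1, rfl⟩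

lemma lamAlpha_ind_le_gradE (hnn : ∀ i j, 0 ≤ w i j) (hd : ∀ i, 0 ≤ d i) {α : ℝ} (hα : 0 ≤ α)
    (h0 : ∀ i, i ∉ S → ψ i = 0) (h1 : dnorm d r ψ = 1) :
    lamAlpha w d r α (ind S) ≤ gradE w ψ := by
  refine csInf_le ⟨0, ?_⟩ ⟨ψ, h1, ?_⟩
  · rintro _ ⟨φ, -, rfl⟩
    rw [sum_penalty_ind_eq_outerMass]
    exact add_nonneg (gradE_nonneg hnn φ) (mul_nonneg hα (outerMass_nonneg hd φ))
  · rw [sum_penalty_ind_eq_outerMass, outerMass, sum_eq_zero fun i hi => by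
      rw [h0 i (mem_compl.mp hi)]; ring, mul_zero, add_zero]

end Variational

section QuadMean

variable {w : Fin n → Fin n → ℝ} (a b : Fin n → ℝ)

lemma sq_quadMean (i : Fin n) : quadMean a b i ^ 2 = (a i ^ 2 + b i ^ 2) / 2 :=
  Real.sq_sqrt (by positivity)

lemma dnorm_quadMean (d : Fin n → ℝ) (r : ℝ) :
    dnorm d r (quadMean a b) = (dnorm d r a + dnorm d r b) / 2 := by
  simp only [dnorm, sq_quadMean, ← sum_add_distrib, sum_div]
  exact sum_congr rfl fun i _ => by ring

-- Lagrange's identity `(x² + y²)(u² + v²) = (xu + yv)² + (xv - yu)²` exhibits the defect as a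
-- Cauchy–Schwarz gap.
lemma quadMean_defect_eq (i j : Fin n) :
    ((a i - a j) ^ 2 + (b i - b j) ^ 2) / 2 - (quadMean a b i - quadMean a b j) ^ 2
      = √((a i * a j + b i * b j) ^ 2 + (a i * b j - a j * b i) ^ 2)
        - (a i * a j + b i * b j) := by
  have hsq := sq_quadMean a b
  have hprod : √((a i * a j + b i * b j) ^ 2 + (a i * b j - a j * b i) ^ 2)
      = 2 * (quadMean a b i * quadMean a b j) := by
    rw [Real.sqrt_eq_iff_mul_self_eq (by positivity)
      (by unfold quadMean; positivity)]
    rw [show 2 * (quadMean a b i * quadMean a b j) * (2 * (quadMean a b i * quadMean a b j))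
      = 4 * (quadMean a b i ^ 2 * quadMean a b j ^ 2) by ring, hsq i, hsq j]
    ring
  rw [hprod]
  linear_combination (-1 : ℝ) * hsq i - hsq j

lemma sq_sub_quadMean_le (i j : Fin n) :
    (quadMean a b i - quadMean a b j) ^ 2 ≤ ((a i - a j) ^ 2 + (b i - b j) ^ 2) / 2 := by
  have h := quadMean_defect_eq a b i j
  have hcs := (le_abs_self (a i * a j + b i * b j)).trans
    (Real.abs_le_sqrt (le_add_of_nonneg_right (sq_nonneg (a i * b j - a j * b i))))
  linarith

lemma mul_eq_mul_of_sq_sub_quadMean_eq {i j : Fin n}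
    (h : (quadMean a b i - quadMean a b j) ^ 2 = ((a i - a j) ^ 2 + (b i - b j) ^ 2) / 2) :
    a i * b j = a j * b i := by
  have hsqrt := quadMean_defect_eq a b i j
  rw [h, sub_self, eq_comm, sub_eq_zero] at hsqrt
  have hsq := Real.sq_sqrt (add_nonneg (sq_nonneg (a i * a j + b i * b j))
    (sq_nonneg (a i * b j - a j * b i)))
  rw [hsqrt, left_eq_add, sq_eq_zero_iff, sub_eq_zero] at hsq
  exact hsq

lemma gradE_add_gradE_sub_two_mul_gradE_quadMean :
    gradE w a + gradE w b - 2 * gradE w (quadMean a b) = ∑ i, ∑ j, w i j *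
      (((a i - a j) ^ 2 + (b i - b j) ^ 2) / 2 - (quadMean a b i - quadMean a b j) ^ 2) := by
  simp only [gradE, mul_sub, mul_div, sum_sub_distrib, mul_add, add_div, sum_add_distrib,
    ← sum_div]
  ring

variable {a b}

lemma two_mul_gradE_quadMean_le (hnn : ∀ i j, 0 ≤ w i j) :
    2 * gradE w (quadMean a b) ≤ gradE w a + gradE w b := by
  have h := gradE_add_gradE_sub_two_mul_gradE_quadMean (w := w) a b
  have hsum : 0 ≤ ∑ i, ∑ j, w i j *
      (((a i - a j) ^ 2 + (b i - b j) ^ 2) / 2 - (quadMean a b i - quadMean a b j) ^ 2) :=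
    sum_nonneg fun i _ => sum_nonneg fun j _ =>
      mul_nonneg (hnn i j) (sub_nonneg.mpr (sq_sub_quadMean_le a b i j))
  linarith

lemma mul_eq_mul_of_two_mul_gradE_quadMean_eq (hnn : ∀ i j, 0 ≤ w i j)
    (h : 2 * gradE w (quadMean a b) = gradE w a + gradE w b) {i j : Fin n} (hw : 0 < w i j) :
    a i * b j = a j * b i := by
  have hterm_nonneg : ∀ i j, 0 ≤ w i j *
      (((a i - a j) ^ 2 + (b i - b j) ^ 2) / 2 - (quadMean a b i - quadMean a b j) ^ 2) :=
    fun i j => mul_nonneg (hnn i j) (sub_nonneg.mpr (sq_sub_quadMean_le a b i j))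
  have hsum := gradE_add_gradE_sub_two_mul_gradE_quadMean (w := w) a b
  rw [h, sub_self, eq_comm, sum_eq_zero_iff_of_nonneg fun i _ =>
    sum_nonneg fun j _ => hterm_nonneg i j] at hsum
  have hterm := (sum_eq_zero_iff_of_nonneg fun j _ => hterm_nonneg i j).mp
    (hsum i (mem_univ i)) j (mem_univ j)
  rw [mul_eq_zero, or_iff_right hw.ne', sub_eq_zero] at hterm
  exact mul_eq_mul_of_sq_sub_quadMean_eq a b hterm.symm

end QuadMean

lemma mul_eq_mul_of_reflTransGen {α M : Type*} [CommMonoidWithZero M] [IsCancelMulZero M]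
    {R : α → α → Prop} {a b : α → M} (hR : ∀ p q, R p q → b p ≠ 0 ∧ a p * b q = a q * b p)
    {i j : α} (h : Relation.ReflTransGen R i j) : a i * b j = a j * b i := by
  induction h with
  | refl => rfl
  | @tail p q _ hpq ih =>
    obtain ⟨hbp, hedge⟩ := hR p q hpq
    refine mul_right_cancel₀ hbp ?_
    calc a i * b q * b p = a i * b p * b q := by rw [mul_right_comm]
      _ = b i * (a p * b q) := by rw [ih]; ac_rfl
      _ = a q * b i * b p := by rw [hedge]; ac_rfl

namespace IsDirichletMinimizer

variable {w : Fin n → Fin n → ℝ} {d : Fin n → ℝ} {r : ℝ} {S : Finset (Fin n)}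
  {a b : Fin n → ℝ}

lemma quadMean (hnn : ∀ i j, 0 ≤ w i j) (ha : IsDirichletMinimizer w d r S a)
    (hb : IsDirichletMinimizer w d r S b) : IsDirichletMinimizer w d r S (quadMean a b) := by
  have h0 : ∀ i, i ∉ S → _root_.quadMean a b i = 0 := fun i hi => by
    simp [_root_.quadMean, ha.eq_zero_of_notMem i hi, hb.eq_zero_of_notMem i hi]
  have h1 : dnorm d r (_root_.quadMean a b) = 1 := by
    rw [dnorm_quadMean, ha.dnorm_eq_one, hb.dnorm_eq_one]
    norm_num
  refine ⟨h0, h1, le_antisymm ?_ (dirEig_le_gradE hnn h0 h1)⟩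
  linarith [two_mul_gradE_quadMean_le (a := a) (b := b) hnn, ha.gradE_eq, hb.gradE_eq]

lemma mul_eq_mul (hnn : ∀ i j, 0 ≤ w i j) (ha : IsDirichletMinimizer w d r S a)
    (hb : IsDirichletMinimizer w d r S b) {i j : Fin n} (hw : 0 < w i j) :
    a i * b j = a j * b i := by
  refine mul_eq_mul_of_two_mul_gradE_quadMean_eq hnn ?_ hw
  rw [(ha.quadMean hnn hb).gradE_eq, ha.gradE_eq, hb.gradE_eq, two_mul]

lemma eq_of_nonneg (hnn : ∀ i j, 0 ≤ w i j) (hS : S.Nonempty)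
    (hSconn : ∀ i ∈ S, ∀ j ∈ S,
      Relation.ReflTransGen (fun a b => a ∈ S ∧ b ∈ S ∧ 0 < w a b) i j)
    (ha : IsDirichletMinimizer w d r S a) (hb : IsDirichletMinimizer w d r S b)
    (ha_nonneg : 0 ≤ a) (hb_pos : ∀ i ∈ S, 0 < b i) : a = b := by
  obtain ⟨i₀, hi₀⟩ := hS
  set t := a i₀ / b i₀
  have hab : a = t • b := funext fun i => by
    by_cases hi : i ∈ S
    · have hcross := mul_eq_mul_of_reflTransGen (a := a) (b := b)
        (fun p q ⟨hp, _, hw⟩ => ⟨(hb_pos p hp).ne', ha.mul_eq_mul hnn hb hw⟩)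
        (hSconn i₀ hi₀ i hi)
      rw [Pi.smul_apply, smul_eq_mul, div_mul_eq_mul_div, eq_div_iff (hb_pos i₀ hi₀).ne', hcross]
    · simp [ha.eq_zero_of_notMem i hi, hb.eq_zero_of_notMem i hi]
  have ht_sq : t ^ 2 = 1 := by
    have hnorm := congrArg (dnorm d r) hab
    rwa [dnorm_smul, ha.dnorm_eq_one, hb.dnorm_eq_one, mul_one, eq_comm] at hnorm
  have ht : t = 1 :=
    (pow_eq_one_iff_of_nonneg (div_nonneg (ha_nonneg i₀) (hb_pos i₀ hi₀).le) two_ne_zero).mp ht_sq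
  rw [hab, ht, one_smul]

end IsDirichletMinimizer

lemma tendsto_zero_of_mul_le {f : ℝ → ℝ} {C : ℝ} (h0 : ∀ᶠ x in atTop, 0 ≤ f x)
    (hC : ∀ᶠ x in atTop, x * f x ≤ C) : Tendsto f atTop (𝓝 0) := by
  refine tendsto_of_tendsto_of_tendsto_of_le_of_le' (h := fun x => C / x) tendsto_const_nhds
    ((tendsto_const_nhds (x := C)).div_atTop tendsto_id) h0 ?_
  filter_upwards [hC, eventually_gt_atTop 0] with x hx hx₀
  exact (le_div_iff₀' hx₀).mpr hx

lemma IsDirichletMinimizer.of_mapClusterPt {ι : Type*} {l : Filter ι}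
    {w : Fin n → Fin n → ℝ} {d : Fin n → ℝ} {r : ℝ} {S : Finset (Fin n)}
    {f : ι → Fin n → ℝ} {φ : Fin n → ℝ} (hnn : ∀ i j, 0 ≤ w i j) (hdpos : ∀ i, 0 < d i)
    (hnorm : ∀ᶠ x in l, dnorm d r (f x) = 1)
    (henergy : ∀ᶠ x in l, gradE w (f x) ≤ dirEig w d r S)
    (hmass : Tendsto (fun x => outerMass d r S (f x)) l (𝓝 0)) (hφ : MapClusterPt φ l f) :
    IsDirichletMinimizer w d r S φ := by
  have hmass_φ : outerMass d r S φ = 0 := eq_of_nhds_neBot <|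
    (hφ.continuousAt_comp (continuous_outerMass d r S).continuousAt).clusterPt.mono hmass
  have h0 : ∀ i, i ∉ S → φ i = 0 := fun _ hi => eq_zero_of_outerMass_eq_zero hdpos hmass_φ hi
  have h1 : dnorm d r φ = 1 :=
    (isClosed_eq (continuous_dnorm d r) continuous_const).mem_of_mapClusterPt hφ hnorm
  refine ⟨h0, h1, le_antisymm ?_ (dirEig_le_gradE hnn h0 h1)⟩
  exact (isClosed_le (continuous_gradE w) continuous_const).mem_of_mapClusterPt hφ henergy

theorem eigenvector_localization_general
    (n : ℕ) (w : Fin n → Fin n → ℝ)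
    (hsym : ∀ i j, w i j = w j i) (hnn : ∀ i j, 0 ≤ w i j)
    (r : ℝ)
    (d : Fin n → ℝ) (hd : ∀ i, d i = ∑ j, w i j) (hdpos : ∀ i, 0 < d i)
    (S : Finset (Fin n)) (hS : S.Nonempty)
    (hSconn : ∀ i ∈ S, ∀ j ∈ S,
      Relation.ReflTransGen (fun a b => a ∈ S ∧ b ∈ S ∧ 0 < w a b) i j)
    (ψα : ℝ → Fin n → ℝ)
    (hpos : ∀ α : ℝ, 0 < α → ∀ i, 0 < ψα α i)
    (hnorm : ∀ α : ℝ, 0 < α → dnorm d r (ψα α) = 1)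
    (heig : ∀ α : ℝ, 0 < α → ∀ i,
      lapApply w d r (ψα α) i + α * (1 - ind S i) * ψα α i
        = lamAlpha w d r α (ind S) * ψα α i)
    (ψD : Fin n → ℝ)
    (hDzero : ∀ i, i ∉ S → ψD i = 0) (hDnorm : dnorm d r ψD = 1)
    (hDpos : ∀ i ∈ S, 0 < ψD i) (hDmin : gradE w ψD = dirEig w d r S) :
    (∀ i, Filter.Tendsto (fun α : ℝ => ψα α i) Filter.atTop (nhds (ψD i))) ∧
    Filter.Tendsto (fun α : ℝ => ∑ i ∈ Sᶜ, Real.rpow (d i) r * ψα α i ^ 2)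
      Filter.atTop (nhds 0) := by
  have hd_nonneg : ∀ i, 0 ≤ d i := fun i => (hdpos i).le
  have hbound : ∀ α, 0 < α →
      gradE w (ψα α) + α * outerMass d r S (ψα α) ≤ dirEig w d r S := fun α hα =>
    hDmin ▸ (gradE_add_mul_outerMass_eq_of_eigen hsym hd hdpos (hnorm α hα) (heig α hα)).trans_le
      (lamAlpha_ind_le_gradE hnn hd_nonneg hα.le hDzero hDnorm)
  have hmass_nonneg : ∀ α, 0 ≤ outerMass d r S (ψα α) := fun α => outerMass_nonneg hd_nonneg _
  have hmass : Tendsto (fun α => outerMass d r S (ψα α)) atTop (𝓝 0) :=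
    tendsto_zero_of_mul_le (.of_forall hmass_nonneg) <|
      (eventually_gt_atTop 0).mono fun α hα => by
        linarith [hbound α hα, gradE_nonneg hnn (ψα α)]
  refine ⟨fun i => tendsto_pi_nhds.mp ?_ i, hmass⟩
  refine (isCompact_dnorm_eq_one hdpos).tendsto_nhds_of_unique_mapClusterPt
    ((eventually_gt_atTop 0).mono hnorm) fun φ _ hφ => ?_
  have hφ_min : IsDirichletMinimizer w d r S φ :=
    .of_mapClusterPt hnn hdpos ((eventually_gt_atTop 0).mono hnorm)
      ((eventually_gt_atTop 0).mono fun α hα => by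
        linarith [hbound α hα, mul_nonneg hα.le (hmass_nonneg α)])
      hmass hφ
  have hφ_nonneg : 0 ≤ φ := isClosed_Ici.mem_of_mapClusterPt hφ <|
    (eventually_gt_atTop 0).mono fun α hα i => (hpos α hα i).le
  exact hφ_min.eq_of_nonneg hnn hS hSconn ⟨hDzero, hDnorm, hDmin⟩ hφ_nonneg hDpos

/-- eigenvector localization: the positive normalized minimizers `ψ^α`
converge as `α → ∞` to the positive normalized first Dirichlet eigenvector of `S`, and
the mass on `Sᶜ` tends to zero. -/
theorem eigenvector_localization
    (n : ℕ) (w : Fin n → Fin n → ℝ)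
    (hsym : ∀ i j, w i j = w j i) (hnn : ∀ i j, 0 ≤ w i j)
    (hconn : gconn w)
    (r : ℝ) (hr : r ∈ Set.Icc (0 : ℝ) 1)
    (d : Fin n → ℝ) (hd : ∀ i, d i = ∑ j, w i j) (hdpos : ∀ i, 0 < d i)
    (S : Finset (Fin n)) (hS : S.Nonempty) (hSc : Sᶜ.Nonempty)
    (hSconn : ∀ i ∈ S, ∀ j ∈ S,
      Relation.ReflTransGen (fun a b => a ∈ S ∧ b ∈ S ∧ 0 < w a b) i j)
    (ψα : ℝ → Fin n → ℝ)
    (hpos : ∀ α : ℝ, 0 < α → ∀ i, 0 < ψα α i)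
    (hnorm : ∀ α : ℝ, 0 < α → dnorm d r (ψα α) = 1)
    (heig : ∀ α : ℝ, 0 < α → ∀ i,
      lapApply w d r (ψα α) i + α * (1 - ind S i) * ψα α i
        = lamAlpha w d r α (ind S) * ψα α i)
    (ψD : Fin n → ℝ)
    (hDzero : ∀ i, i ∉ S → ψD i = 0) (hDnorm : dnorm d r ψD = 1)
    (hDpos : ∀ i ∈ S, 0 < ψD i) (hDmin : gradE w ψD = dirEig w d r S) :
    (∀ i, Filter.Tendsto (fun α : ℝ => ψα α i) Filter.atTop (nhds (ψD i))) ∧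
    Filter.Tendsto (fun α : ℝ => ∑ i ∈ Sᶜ, Real.rpow (d i) r * ψα α i ^ 2)
      Filter.atTop (nhds 0) :=
  eigenvector_localization_general n w hsym hnn r d hd hdpos S hS hSconn ψα hpos hnorm heig ψD
    hDzero hDnorm hDpos hDmin
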